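/- For every n ≥ 1, the sum over all linked partitions τ of {1,...,n} of a^{one(τ)} b^{os(τ)-1} equals the rising factorial (a+b)_{n-1}, where one(τ) is the number of arcs with left-hand endpoint 1 and os(τ) is the number of vertices that are origins or singletons in the linear representation of τ. -/

import Mathlib

open Finset Polynomial
open scoped Classical

/-! ### Tree-like tableaux (grid model)
A cell is a pair (row index, column index), both 0-based.  A Ferrers diagram
is a finite lower set of cells.  A tree-like tableau of size `n` is a pair
`(F, P)` where `P` is the set of pointed cells of the diagram `F`. -/

def IsFerrersGrid (F : Finset (ℕ × ℕ)) : Prop :=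
  ∀ p ∈ F, ∀ i j : ℕ, i ≤ p.1 → j ≤ p.2 → (i, j) ∈ F

def IsTLT (F P : Finset (ℕ × ℕ)) : Prop :=
  F.Nonempty ∧ IsFerrersGrid F ∧ P ⊆ F ∧ (0, 0) ∈ P ∧
  (∀ p ∈ P, p ≠ (0, 0) →
    Xor' (∃ i < p.1, (i, p.2) ∈ P) (∃ j < p.2, (p.1, j) ∈ P)) ∧
  (∀ p ∈ F, ∃ q ∈ P, q.1 = p.1) ∧
  (∀ p ∈ F, ∃ q ∈ P, q.2 = p.2)

/-- The finite set of tree-like tableaux of size `n`. -/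
noncomputable def TLT (n : ℕ) : Finset (Finset (ℕ × ℕ) × Finset (ℕ × ℕ)) :=
  ((Finset.range n ×ˢ Finset.range n).powerset ×ˢ
    (Finset.range n ×ˢ Finset.range n).powerset).filter
    (fun T => IsTLT T.1 T.2 ∧ T.2.card = n)

/-- number of non-root points in the topmost row -/
noncomputable def topT (P : Finset (ℕ × ℕ)) : ℕ :=
  (P.filter (fun p => p.1 = 0 ∧ p.2 ≠ 0)).card
/-- number of non-root points in the leftmost column -/
noncomputable def leftT (P : Finset (ℕ × ℕ)) : ℕ :=
  (P.filter (fun p => p.2 = 0 ∧ p.1 ≠ 0)).card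
/-- corners of a Ferrers diagram -/
noncomputable def cornersT (F : Finset (ℕ × ℕ)) : Finset (ℕ × ℕ) :=
  F.filter (fun p => (p.1 + 1, p.2) ∉ F ∧ (p.1, p.2 + 1) ∉ F)
/-- non-occupied corners -/
noncomputable def nocT (F P : Finset (ℕ × ℕ)) : ℕ :=
  ((cornersT F).filter (fun p => p ∉ P)).card
/-- occupied corners -/
noncomputable def ocT (F P : Finset (ℕ × ℕ)) : ℕ :=
  ((cornersT F).filter (fun p => p ∈ P)).card
/-- symmetric (invariant under reflection across the main diagonal) -/
def IsSymTLT (F P : Finset (ℕ × ℕ)) : Prop :=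
  F.image Prod.swap = F ∧ P.image Prod.swap = P

/-! ### Alternative tableaux (border-label model)
A Ferrers diagram of size `n` (empty rows and columns allowed) is encoded by
the set `C ⊆ {1,…,n}` of its column labels (labels of the south-east border
steps, read from north-east to south-west); the remaining labels are row
labels.  Row `r` and column `c` intersect in a cell (written `(r, c)`)
exactly when `r < c`.  Inside a row, cells further to the left have *larger*
column labels; inside a column, cells further up have *smaller* row labels.
An alternative tableau is `(C, L, U)` where `L` (resp. `U`) is the set of
cells containing a left (resp. up) arrow. -/

def IsAT (n : ℕ) (C : Finset ℕ) (L U : Finset (ℕ × ℕ)) : Prop :=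
  C ⊆ Finset.Icc 1 n ∧ Disjoint L U ∧
  (∀ p ∈ L ∪ U, p.1 ∈ Finset.Icc 1 n ∧ p.1 ∉ C ∧ p.2 ∈ C ∧ p.1 < p.2) ∧
  (∀ p ∈ L, ∀ c' : ℕ, p.2 < c' → (p.1, c') ∉ L ∪ U) ∧
  (∀ p ∈ U, ∀ r' : ℕ, r' < p.1 → (r', p.2) ∉ L ∪ U)

/-- the finite set of alternative tableaux of size `n` -/
noncomputable def ATset (n : ℕ) :
    Finset (Finset ℕ × Finset (ℕ × ℕ) × Finset (ℕ × ℕ)) :=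
  ((Finset.Icc 1 n).powerset ×ˢ
    ((Finset.Icc 1 n ×ˢ Finset.Icc 1 n).powerset ×ˢ
      (Finset.Icc 1 n ×ˢ Finset.Icc 1 n).powerset)).filter
    (fun T => IsAT n T.1 T.2.1 T.2.2)

/-- alternative tableaux of size `n` in which every column contains an up arrow -/
noncomputable def ATstar (n : ℕ) :
    Finset (Finset ℕ × Finset (ℕ × ℕ) × Finset (ℕ × ℕ)) :=
  (ATset n).filter (fun T => ∀ c ∈ T.1, ∃ p ∈ T.2.2, p.2 = c)

/-- label of the topmost row -/
noncomputable def topRowA (n : ℕ) (C : Finset ℕ) : ℕ :=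
  WithTop.untopD 0 ((Finset.Icc 1 n \ C).min)
/-- number of arrows in the topmost row -/
noncomputable def topA (n : ℕ) (C : Finset ℕ) (L U : Finset (ℕ × ℕ)) : ℕ :=
  ((L ∪ U).filter (fun p => p.1 = topRowA n C)).card
/-- number of unrestricted rows (rows with no left arrow) -/
noncomputable def urrA (n : ℕ) (C : Finset ℕ) (L : Finset (ℕ × ℕ)) : ℕ :=
  ((Finset.Icc 1 n \ C).filter (fun r => ∀ p ∈ L, p.1 ≠ r)).card
/-- number of non-occupied corners (the corners are exactly the cells `(c-1, c)`
with `c` a column label and `c-1` a row label) -/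
noncomputable def nocA (n : ℕ) (C : Finset ℕ) (L U : Finset (ℕ × ℕ)) : ℕ :=
  (C.filter (fun c => c - 1 ∈ Finset.Icc 1 n \ C ∧ (c - 1, c) ∉ L ∪ U)).card
/-- symmetric alternative tableau of size `2n` (reflection across the main
diagonal exchanges border label `k` with `2n+1-k`, rows with columns and
left arrows with up arrows) -/
def IsSymAT (n : ℕ) (C : Finset ℕ) (L U : Finset (ℕ × ℕ)) : Prop :=
  (∀ k ∈ Finset.Icc 1 (2 * n), (k ∈ C ↔ (2 * n + 1 - k) ∉ C)) ∧
  (∀ r c : ℕ, (r, c) ∈ L ↔ (2 * n + 1 - c, 2 * n + 1 - r) ∈ U)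

/-! ### Linked partitions (linear representation / arc model)
A linked partition of `{1,…,n}` is identified with its set of arcs `(i, j)`,
`i < j`: each vertex is the right-hand endpoint of at most one arc. -/

def IsLP (n : ℕ) (A : Finset (ℕ × ℕ)) : Prop :=
  (∀ p ∈ A, 1 ≤ p.1 ∧ p.1 < p.2 ∧ p.2 ≤ n) ∧
  (∀ p ∈ A, ∀ q ∈ A, p.2 = q.2 → p.1 = q.1)

noncomputable def LP (n : ℕ) : Finset (Finset (ℕ × ℕ)) :=
  ((Finset.Icc 1 n ×ˢ Finset.Icc 1 n).powerset).filter (IsLP n)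

/-- number of origins plus singletons (= vertices with no incoming arc) -/
noncomputable def osL (n : ℕ) (A : Finset (ℕ × ℕ)) : ℕ :=
  ((Finset.Icc 1 n).filter (fun j => ∀ p ∈ A, p.2 ≠ j)).card
/-- number of arcs with left-hand endpoint `1` -/
noncomputable def oneL (A : Finset (ℕ × ℕ)) : ℕ :=
  (A.filter (fun p => p.1 = 1)).card
/-- a destination: only a right-hand endpoint -/
def IsDest (A : Finset (ℕ × ℕ)) (j : ℕ) : Prop :=
  (∃ p ∈ A, p.2 = j) ∧ ∀ p ∈ A, p.1 ≠ j

/-- consecutive pairs of a finite set of naturals -/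
noncomputable def consecPairs (S : Finset ℕ) : Finset (ℕ × ℕ) :=
  (S ×ˢ S).filter (fun p => p.1 < p.2 ∧ ∀ k ∈ S, ¬(p.1 < k ∧ k < p.2))

/-- the set of row labels of cells of column `c` containing an arrow -/
noncomputable def colRows (L U : Finset (ℕ × ℕ)) (c : ℕ) : Finset ℕ :=
  ((L ∪ U).filter (fun p => p.2 = c)).image Prod.fst

/-- the map `Φ`: for each column `j`, with the up arrow in row `i₁` and the
left arrows in rows `i₂ < … < i_t`, draw the arcs `(i₁,i₂), …, (i_{t-1},i_t), (i_t, j)`,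
i.e. the consecutive pairs of `{i₁,…,i_t, j}`. -/
noncomputable def Phi (T : Finset ℕ × Finset (ℕ × ℕ) × Finset (ℕ × ℕ)) :
    Finset (ℕ × ℕ) :=
  T.1.biUnion (fun c => consecPairs (insert c (colRows T.2.1 T.2.2 c)))

/-! ### Type B alternative tableaux
Encoded by `(C, L, U)` with `C ⊆ Icc 1 n` the set of column labels of the
subdiagram; rows of the shifted diagram are labelled by
`(Icc 1 n \ C) ∪ (-C)`, rows higher up having smaller labels.  Row `x` and
column `c` intersect in a cell exactly when (`x > 0` and `x < c`) or
(`x < 0` and `-x ≤ c`); the cell `(-c, c)` is the diagonal cell of row `-c`. -/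

def cellB (n : ℕ) (C : Finset ℤ) (x c : ℤ) : Prop :=
  c ∈ C ∧ ((1 ≤ x ∧ x ≤ (n : ℤ) ∧ x ∉ C ∧ x < c) ∨ (x < 0 ∧ -x ∈ C ∧ -x ≤ c))

def IsATB (n : ℕ) (C : Finset ℤ) (L U : Finset (ℤ × ℤ)) : Prop :=
  C ⊆ Finset.Icc 1 (n : ℤ) ∧ Disjoint L U ∧
  (∀ p ∈ L ∪ U, p.2 ∈ C ∧
    ((1 ≤ p.1 ∧ p.1 ≤ (n : ℤ) ∧ p.1 ∉ C ∧ p.1 < p.2) ∨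
      (p.1 < 0 ∧ -p.1 ∈ C ∧ -p.1 < p.2))) ∧
  (∀ p ∈ L, ∀ c' : ℤ, p.2 < c' → (p.1, c') ∉ L ∪ U) ∧
  (∀ p ∈ U, ∀ x' : ℤ, x' < p.1 → (x', p.2) ∉ L ∪ U) ∧
  (∀ i ∈ C, (∃ p ∈ U, p.2 = i) → ∀ c' : ℤ, (-i, c') ∉ L ∪ U)

noncomputable def ATB (n : ℕ) :
    Finset (Finset ℤ × Finset (ℤ × ℤ) × Finset (ℤ × ℤ)) :=
  ((Finset.Icc (1 : ℤ) (n : ℤ)).powerset ×ˢ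
    ((Finset.Icc (-(n : ℤ)) (n : ℤ) ×ˢ Finset.Icc (1 : ℤ) (n : ℤ)).powerset ×ˢ
      (Finset.Icc (-(n : ℤ)) (n : ℤ) ×ˢ Finset.Icc (1 : ℤ) (n : ℤ)).powerset)).filter
    (fun T => IsATB n T.1 T.2.1 T.2.2)

/-- the row labels of a type B alternative tableau -/
noncomputable def rowsB (n : ℕ) (C : Finset ℤ) : Finset ℤ :=
  (Finset.Icc (1 : ℤ) (n : ℤ) \ C) ∪ C.image (fun c => -c)

/-- number of unrestricted rows: row `x` is unrestricted when it contains no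
left arrow and column `|x|` (if it exists) contains no up arrow -/
noncomputable def urrB (n : ℕ) (C : Finset ℤ) (L U : Finset (ℤ × ℤ)) : ℕ :=
  ((rowsB n C).filter (fun x => (∀ p ∈ L, p.1 ≠ x) ∧ ∀ p ∈ U, p.2 ≠ |x|)).card

/-- the corners of the shifted Ferrers diagram -/
noncomputable def cornersB (n : ℕ) (C : Finset ℤ) : Finset (ℤ × ℤ) :=
  (Finset.Icc (-(n : ℤ)) (n : ℤ) ×ˢ Finset.Icc (1 : ℤ) (n : ℤ)).filter
    (fun p => cellB n C p.1 p.2 ∧ (∀ x' : ℤ, p.1 < x' → ¬ cellB n C x' p.2) ∧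
      (∀ c' : ℤ, c' < p.2 → ¬ cellB n C p.1 c'))

/-- number of non-occupied diagonal corners -/
noncomputable def nocDiagB (n : ℕ) (C : Finset ℤ) (L U : Finset (ℤ × ℤ)) : ℕ :=
  ((cornersB n C).filter (fun p => p.1 = -p.2 ∧ p ∉ L ∪ U)).card
/-- number of non-occupied non-diagonal corners -/
noncomputable def nocOffB (n : ℕ) (C : Finset ℤ) (L U : Finset (ℤ × ℤ)) : ℕ :=
  ((cornersB n C).filter (fun p => p.1 ≠ -p.2 ∧ p ∉ L ∪ U)).card

/-! ### Type B linked partitions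
A pair `(V, A)`: for each `i ∈ {1,…,n}` exactly one of `i, -i` belongs to
the vertex set `V`; `A` is the set of arcs `(x, y)`, `x < y`, with each
vertex the right-hand endpoint of at most one arc. -/

def IsLPB (n : ℕ) (V : Finset ℤ) (A : Finset (ℤ × ℤ)) : Prop :=
  (∀ v ∈ V, 1 ≤ |v| ∧ |v| ≤ (n : ℤ)) ∧
  (∀ i ∈ Finset.Icc (1 : ℤ) (n : ℤ), ((i ∈ V ∧ -i ∉ V) ∨ (-i ∈ V ∧ i ∉ V))) ∧
  (∀ p ∈ A, p.1 ∈ V ∧ p.2 ∈ V ∧ p.1 < p.2) ∧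
  (∀ p ∈ A, ∀ q ∈ A, p.2 = q.2 → p.1 = q.1)

noncomputable def LPB (n : ℕ) : Finset (Finset ℤ × Finset (ℤ × ℤ)) :=
  ((Finset.Icc (-(n : ℤ)) (n : ℤ)).powerset ×ˢ
    (Finset.Icc (-(n : ℤ)) (n : ℤ) ×ˢ Finset.Icc (-(n : ℤ)) (n : ℤ)).powerset).filter
    (fun T => IsLPB n T.1 T.2)

/-- number of origins plus singletons (= vertices with no incoming arc) -/
noncomputable def osB (V : Finset ℤ) (A : Finset (ℤ × ℤ)) : ℕ :=
  (V.filter (fun v => ∀ p ∈ A, p.2 ≠ v)).card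

/-- a legal destination: `j` is only a right-hand endpoint, and its incoming
arc `(a, j)` satisfies `|a| < |j|` -/
def IsLegalDestB (A : Finset (ℤ × ℤ)) (j : ℤ) : Prop :=
  (∃ p ∈ A, p.2 = j ∧ |p.1| < |j|) ∧ ∀ p ∈ A, p.1 ≠ j

/-- consecutive pairs of a finite set of integers -/
noncomputable def consecPairsZ (S : Finset ℤ) : Finset (ℤ × ℤ) :=
  (S ×ˢ S).filter (fun p => p.1 < p.2 ∧ ∀ k ∈ S, ¬(p.1 < k ∧ k < p.2))

/-- row labels of cells of column `c` containing an arrow -/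
noncomputable def colRowsB (L U : Finset (ℤ × ℤ)) (c : ℤ) : Finset ℤ :=
  ((L ∪ U).filter (fun p => p.2 = c)).image Prod.fst

/-- column `c` contains an up arrow -/
def HasUp (U : Finset (ℤ × ℤ)) (c : ℤ) : Prop := ∃ p ∈ U, p.2 = c

/-- the map `Φ_B`: columns with an up arrow give positive vertices and chains
of arcs through their arrows (consecutive pairs of the arrow rows together
with the column label); columns without an up arrow give negative vertices
`-j` and arcs from `-j` to each row containing a left arrow of that column;
rows give positive vertices. -/
noncomputable def PhiB (n : ℕ) (T : Finset ℤ × Finset (ℤ × ℤ) × Finset (ℤ × ℤ)) :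
    Finset ℤ × Finset (ℤ × ℤ) :=
  ((Finset.Icc (1 : ℤ) (n : ℤ) \ T.1) ∪ T.1.filter (fun c => HasUp T.2.2 c) ∪
      (T.1.filter (fun c => ¬ HasUp T.2.2 c)).image (fun c => -c),
    (T.1.filter (fun c => HasUp T.2.2 c)).biUnion
        (fun c => consecPairsZ (insert c (colRowsB T.2.1 T.2.2 c))) ∪
      (T.1.filter (fun c => ¬ HasUp T.2.2 c)).biUnion
        (fun c => (colRowsB T.2.1 T.2.2 c).image (fun r => (-c, r))))

/-! ### Auxiliary lemmas for the proof of Statement 7 -/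

lemma mem_LP_iff {n : ℕ} {A : Finset (ℕ × ℕ)} : A ∈ LP n ↔ IsLP n A := by
  constructor
  · intro h; exact (Finset.mem_filter.1 h).2
  · intro h
    refine Finset.mem_filter.2 ⟨Finset.mem_powerset.2 ?_, h⟩
    intro p hp
    obtain ⟨h1, h2, h3⟩ := h.1 p hp
    exact Finset.mem_product.2 ⟨Finset.mem_Icc.2 ⟨h1, le_trans (le_of_lt h2) h3⟩,
      Finset.mem_Icc.2 ⟨le_trans h1 (le_of_lt h2), h3⟩⟩

lemma osL_pos {n : ℕ} {A : Finset (ℕ × ℕ)} (hn : 1 ≤ n) (h : IsLP n A) : 1 ≤ osL n A := by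
  have h1 : (1:ℕ) ∈ (Finset.Icc 1 n).filter (fun j => ∀ p ∈ A, p.2 ≠ j) := by
    refine Finset.mem_filter.2 ⟨Finset.mem_Icc.2 ⟨le_refl 1, hn⟩, ?_⟩
    intro p hp
    obtain ⟨a1, a2, _⟩ := h.1 p hp
    omega
  exact Finset.card_pos.2 ⟨1, h1⟩

/-- insert an arc `(i, n+1)` (or nothing if `i = 0`) -/
noncomputable def lpIns (n : ℕ) (B : Finset (ℕ × ℕ)) (i : ℕ) : Finset (ℕ × ℕ) :=
  if i = 0 then B else insert (i, n + 1) B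

/-- forget the arc ending at `n+1`, remembering its left endpoint (`0` if none) -/
noncomputable def lpProj (n : ℕ) (A : Finset (ℕ × ℕ)) : Finset (ℕ × ℕ) × ℕ :=
  (A.filter (fun p => p.2 ≠ n + 1), (A.filter (fun p => p.2 = n + 1)).sum Prod.fst)

lemma lp_top_cases {n : ℕ} {A : Finset (ℕ × ℕ)} (h : IsLP (n+1) A) :
    A.filter (fun p => p.2 = n + 1) = ∅ ∨
    ∃ i, 1 ≤ i ∧ i ≤ n ∧ A.filter (fun p => p.2 = n + 1) = {(i, n+1)} := by
  by_cases hS : A.filter (fun p => p.2 = n + 1) = ∅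
  · exact Or.inl hS
  · right
    obtain ⟨q, hq⟩ := Finset.nonempty_of_ne_empty hS
    have hqA := (Finset.mem_filter.1 hq).1
    have hq2 := (Finset.mem_filter.1 hq).2
    obtain ⟨h1, h2, h3⟩ := h.1 q hqA
    refine ⟨q.1, h1, by omega, ?_⟩
    ext p
    simp only [Finset.mem_filter, Finset.mem_singleton]
    constructor
    · rintro ⟨hpA, hp2⟩
      have := h.2 p hpA q hqA (by rw [hp2, hq2])
      exact Prod.ext this (by rw [hp2])
    · rintro rfl
      refine ⟨?_, rfl⟩
      have : (q.1, n + 1) = q := Prod.ext rfl hq2.symm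
      rwa [this]

lemma lpIns_mem {n : ℕ} {B : Finset (ℕ × ℕ)} (hB : IsLP n B) {i : ℕ}
    (hi : i = 0 ∨ (1 ≤ i ∧ i ≤ n)) : IsLP (n+1) (lpIns n B i) := by
  unfold lpIns
  rcases hi with rfl | ⟨hi1, hi2⟩
  · rw [if_pos rfl]
    exact ⟨fun p hp => by obtain ⟨x, y, z⟩ := hB.1 p hp; exact ⟨x, y, by omega⟩, hB.2⟩
  · rw [if_neg (by omega)]
    constructor
    · intro p hp
      rcases Finset.mem_insert.1 hp with rfl | hp'
      · exact ⟨hi1, by omega, le_refl _⟩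
      · obtain ⟨x, y, z⟩ := hB.1 p hp'; exact ⟨x, y, by omega⟩
    · intro p hp q hq hpq
      have hmem : ∀ r ∈ B, r.2 ≤ n := fun r hr => (hB.1 r hr).2.2
      rcases Finset.mem_insert.1 hp with rfl | hp' <;>
        rcases Finset.mem_insert.1 hq with rfl | hq'
      · rfl
      · have := hmem q hq'; simp only at hpq; omega
      · have := hmem p hp'; simp only at hpq; omega
      · exact hB.2 p hp' q hq' hpq

lemma lpProj_lpIns {n : ℕ} {B : Finset (ℕ × ℕ)} (hB : IsLP n B) {i : ℕ}
    (hi : i = 0 ∨ (1 ≤ i ∧ i ≤ n)) : lpProj n (lpIns n B i) = (B, i) := by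
  have hmem : ∀ r ∈ B, r.2 ≠ n + 1 := fun r hr => by have := (hB.1 r hr).2.2; omega
  unfold lpProj lpIns
  rcases hi with rfl | ⟨hi1, hi2⟩
  · rw [if_pos rfl]
    rw [Finset.filter_true_of_mem hmem, Finset.filter_false_of_mem hmem]
    simp
  · rw [if_neg (by omega)]
    have h1 : (insert (i, n+1) B).filter (fun p => p.2 ≠ n + 1) = B := by
      ext p
      simp only [Finset.mem_filter, Finset.mem_insert]
      constructor
      · rintro ⟨rfl | hp, h2⟩
        · simp at h2
        · exact hp
      · intro hp; exact ⟨Or.inr hp, hmem p hp⟩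
    have h2 : (insert (i, n+1) B).filter (fun p => p.2 = n + 1) = {(i, n+1)} := by
      ext p
      simp only [Finset.mem_filter, Finset.mem_insert, Finset.mem_singleton]
      constructor
      · rintro ⟨rfl | hp, hp2⟩
        · rfl
        · exact absurd hp2 (hmem p hp)
      · rintro rfl; exact ⟨Or.inl rfl, rfl⟩
    rw [h1, h2, Finset.sum_singleton]

lemma lpIns_lpProj {n : ℕ} {A : Finset (ℕ × ℕ)} (hA : IsLP (n+1) A) :
    lpIns n (lpProj n A).1 (lpProj n A).2 = A := by
  rcases lp_top_cases hA with hS | ⟨i, hi1, hi2, hS⟩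
  · unfold lpIns lpProj
    rw [hS, Finset.sum_empty, if_pos rfl, Finset.filter_true_of_mem]
    intro p hp h2
    have hmem : p ∈ A.filter (fun p => p.2 = n+1) := Finset.mem_filter.2 ⟨hp, h2⟩
    rw [hS] at hmem
    exact absurd hmem (Finset.notMem_empty p)
  · unfold lpIns lpProj
    simp only [hS, Finset.sum_singleton]
    rw [if_neg (show ¬ (i, n+1).1 = 0 by simp; omega)]
    ext p
    simp only [Finset.mem_insert, Finset.mem_filter]
    constructor
    · rintro (rfl | ⟨hp, _⟩)
      · have hmem : (i, n+1) ∈ A.filter (fun p => p.2 = n+1) := by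
          rw [hS]; exact Finset.mem_singleton_self _
        exact (Finset.mem_filter.1 hmem).1
      · exact hp
    · intro hp
      by_cases h2 : p.2 = n + 1
      · have hmem : p ∈ A.filter (fun p => p.2 = n+1) := Finset.mem_filter.2 ⟨hp, h2⟩
        rw [hS, Finset.mem_singleton] at hmem
        exact Or.inl hmem
      · exact Or.inr ⟨hp, h2⟩

lemma lpProj_mem {n : ℕ} {A : Finset (ℕ × ℕ)} (hA : IsLP (n+1) A) :
    IsLP n (lpProj n A).1 ∧ (lpProj n A).2 ∈ insert 0 (Finset.Icc 1 n) := by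
  constructor
  · constructor
    · intro p hp
      have h1 := Finset.mem_filter.1 hp
      obtain ⟨x, y, z⟩ := hA.1 p h1.1
      exact ⟨x, y, by have := h1.2; omega⟩
    · intro p hp q hq h
      exact hA.2 p (Finset.mem_filter.1 hp).1 q (Finset.mem_filter.1 hq).1 h
  · rcases lp_top_cases hA with hS | ⟨i, hi1, hi2, hS⟩
    · simp [lpProj, hS]
    · simp only [lpProj, hS, Finset.sum_singleton, Finset.mem_insert, Finset.mem_Icc]
      right; exact ⟨hi1, hi2⟩

lemma oneL_lpIns {n : ℕ} {B : Finset (ℕ × ℕ)} (hB : IsLP n B) (i : ℕ) :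
    oneL (lpIns n B i) = if i = 1 then oneL B + 1 else oneL B := by
  have hmem : (1, n+1) ∉ B := fun h => by have := (hB.1 _ h).2.2; omega
  unfold lpIns oneL
  rcases eq_or_ne i 0 with rfl | h0
  · simp
  rw [if_neg h0]
  rcases eq_or_ne i 1 with rfl | h1
  · rw [if_pos rfl, Finset.filter_insert, if_pos rfl, Finset.card_insert_of_notMem]
    intro h; exact hmem (Finset.mem_filter.1 h).1
  · rw [if_neg h1, Finset.filter_insert, if_neg h1]

lemma osL_lpIns {n : ℕ} {B : Finset (ℕ × ℕ)} (hB : IsLP n B) {i : ℕ}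
    (hi : i = 0 ∨ (1 ≤ i ∧ i ≤ n)) :
    osL (n+1) (lpIns n B i) = if i = 0 then osL n B + 1 else osL n B := by
  have hIcc : Finset.Icc 1 (n+1) = insert (n+1) (Finset.Icc 1 n) := by
    ext j; simp only [Finset.mem_Icc, Finset.mem_insert]; omega
  unfold osL lpIns
  rcases hi with rfl | ⟨hi1, hi2⟩
  · have hc1 : ∀ p ∈ B, p.2 ≠ n + 1 := by
      intro p hp
      have := (hB.1 p hp).2.2; omega
    have hc2 : (n + 1) ∉ (Finset.Icc 1 n).filter (fun j => ∀ p ∈ B, p.2 ≠ j) := by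
      intro h
      have hmem := (Finset.mem_filter.1 h).1
      simp only [Finset.mem_Icc] at hmem
      omega
    rw [if_pos rfl, if_pos rfl, hIcc, Finset.filter_insert, if_pos hc1,
      Finset.card_insert_of_notMem hc2]
  · rw [if_neg (by omega), if_neg (by omega)]
    congr 1
    rw [hIcc, Finset.filter_insert, if_neg]
    · apply Finset.filter_congr
      intro j hj
      simp only [Finset.mem_Icc] at hj
      constructor
      · intro h p hp
        exact h p (Finset.mem_insert_of_mem hp)
      · intro h p hp
        rcases Finset.mem_insert.1 hp with rfl | hp'
        · show n + 1 ≠ j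
          omega
        · exact h p hp'
    · push_neg
      exact ⟨(i, n+1), Finset.mem_insert_self _ _, rfl⟩

lemma lp_inner_sum (n : ℕ) (hn : 1 ≤ n) (a b : ℤ) {B : Finset (ℕ × ℕ)} (hB : IsLP n B) :
    ∑ i ∈ insert 0 (Finset.Icc 1 n),
        a ^ oneL (lpIns n B i) * b ^ (osL (n+1) (lpIns n B i) - 1)
      = (a ^ oneL B * b ^ (osL n B - 1)) * (a + b + (n : ℤ) - 1) := by
  have hos := osL_pos hn hB
  have hsplit : Finset.Icc 1 n = insert 1 (Finset.Icc 2 n) := by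
    ext j; simp only [Finset.mem_Icc, Finset.mem_insert]; omega
  rw [hsplit, Finset.sum_insert (by simp [hsplit]),
    Finset.sum_insert (by simp)]
  rw [oneL_lpIns hB 0, osL_lpIns hB (Or.inl rfl)]
  rw [oneL_lpIns hB 1, osL_lpIns hB (Or.inr ⟨le_refl 1, hn⟩)]
  have hconst : ∀ i ∈ Finset.Icc 2 n,
      a ^ oneL (lpIns n B i) * b ^ (osL (n+1) (lpIns n B i) - 1)
        = a ^ oneL B * b ^ (osL n B - 1) := by
    intro i hi
    simp only [Finset.mem_Icc] at hi
    rw [oneL_lpIns hB i, osL_lpIns hB (Or.inr ⟨by omega, hi.2⟩),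
      if_neg (by omega), if_neg (by omega)]
  have hb : b ^ osL n B = b ^ (osL n B - 1) * b := by
    rw [← pow_succ]
    congr 1
    omega
  have hcast : ((n + 1 - 2 : ℕ) : ℤ) = (n : ℤ) - 1 := by
    have h2 : n + 1 - 2 = n - 1 := by omega
    rw [h2, Nat.cast_sub hn, Nat.cast_one]
  rw [Finset.sum_congr rfl hconst, Finset.sum_const, Nat.card_Icc, nsmul_eq_mul,
    if_neg (by norm_num : ¬ (0:ℕ) = 1), if_pos rfl, if_pos rfl,
    if_neg (by norm_num : ¬ (1:ℕ) = 0), Nat.add_sub_cancel, hb, hcast, pow_succ]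
  ring

lemma lp_step (n : ℕ) (hn : 1 ≤ n) (a b : ℤ) :
    ∑ A ∈ LP (n+1), a ^ oneL A * b ^ (osL (n+1) A - 1)
      = (∑ A ∈ LP n, a ^ oneL A * b ^ (osL n A - 1)) * (a + b + (n : ℤ) - 1) := by
  have hmemi : ∀ x ∈ (LP n) ×ˢ insert 0 (Finset.Icc 1 n),
      x.2 = 0 ∨ (1 ≤ x.2 ∧ x.2 ≤ n) := by
    intro x hx
    have := (Finset.mem_product.1 hx).2
    simp only [Finset.mem_insert, Finset.mem_Icc] at this
    tauto
  have h1 : ∑ A ∈ LP (n+1), a ^ oneL A * b ^ (osL (n+1) A - 1)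
      = ∑ x ∈ (LP n) ×ˢ insert 0 (Finset.Icc 1 n),
          a ^ oneL (lpIns n x.1 x.2) * b ^ (osL (n+1) (lpIns n x.1 x.2) - 1) := by
    refine Finset.sum_nbij' (i := fun A => lpProj n A) (j := fun x => lpIns n x.1 x.2)
      ?_ ?_ ?_ ?_ ?_
    · intro A hA
      have h := lpProj_mem (mem_LP_iff.1 hA)
      exact Finset.mem_product.2 ⟨mem_LP_iff.2 h.1, h.2⟩
    · intro x hx
      have hB := mem_LP_iff.1 (Finset.mem_product.1 hx).1
      exact mem_LP_iff.2 (lpIns_mem hB (hmemi x hx))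
    · intro A hA
      exact lpIns_lpProj (mem_LP_iff.1 hA)
    · intro x hx
      have hB := mem_LP_iff.1 (Finset.mem_product.1 hx).1
      exact lpProj_lpIns hB (hmemi x hx)
    · intro A hA
      rw [lpIns_lpProj (mem_LP_iff.1 hA)]
  rw [h1, Finset.sum_product,
    Finset.sum_congr rfl (fun B hB => lp_inner_sum n hn a b (mem_LP_iff.1 hB)),
    ← Finset.sum_mul]

lemma LP_one : LP 1 = {∅} := by
  ext A
  rw [mem_LP_iff, Finset.mem_singleton]
  constructor
  · intro h
    rw [Finset.eq_empty_iff_forall_notMem]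
    intro p hp
    obtain ⟨h1, h2, h3⟩ := h.1 p hp
    omega
  · rintro rfl
    exact ⟨fun p hp => absurd hp (Finset.notMem_empty p),
      fun p hp => absurd hp (Finset.notMem_empty p)⟩

/-- for `n ≥ 1`,
`∑_{τ ∈ ℒ_n} a^{one τ} b^{os τ - 1} = (a+b)_{n-1}`. -/
theorem lp_enumeration (n : ℕ) (hn : 1 ≤ n) (a b : ℤ) :
    ∑ A ∈ LP n, a ^ oneL A * b ^ (osL n A - 1) =
      (ascPochhammer ℤ (n - 1)).eval (a + b) := by
  induction n, hn using Nat.le_induction with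
  | base =>
    rw [LP_one, Finset.sum_singleton]
    simp [oneL, osL, osL, ascPochhammer_zero]
  | succ n hn ih =>
    obtain ⟨m, rfl⟩ : ∃ m, n = m + 1 := ⟨n - 1, by omega⟩
    rw [lp_step (m+1) (by omega) a b, ih]
    rw [show m + 1 + 1 - 1 = m + 1 from rfl, ascPochhammer_succ_eval,
      show m + 1 - 1 = m from rfl]
    push_cast
    ring
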